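/- arXiv:1704.02800 — 2 statements merged into one kernel-verified Lean document; each statement's English description precedes it below -/
import Mathlib

section
/- Let (Γ,γ) be a 5-colored graph of order 2p representing a singular 4-manifold (i.e. every connected component Ξ, of order 2q_Ξ, of every 3-residue Γ_{{i,j,k}} satisfies g_{ij}(Ξ) + g_{ik}(Ξ) + g_{jk}(Ξ) = q_Ξ + 2). Then ω_G(Γ) = 6·( (p−1) − Σ_{i∈Δ₄}(g_{î} − 1) + (χ(K(Γ)) − 2) ), where χ(K(Γ)) = Σ_{i∈Δ₄} g_{î} − Σ_{{r,s,t}} g_{rst} + Σ_{{r,s}} g_{rs} − 3p is the Euler characteristic of the associated 4-pseudocomplex. -/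
/-!
Basic framework: edge-colored graphs à la crystallization theory.

A `(d+1)`-colored graph (finite connected multigraph, regular of degree `d+1`, with a proper
edge-coloring by the color set `C`, `#C = d+1`) is encoded by giving, for each color `c`,
the perfect matching formed by the `c`-colored edges, i.e. a fixed-point-free involution
`inv c` on the vertex set `V` (connectedness is the separate predicate `Conn`).
-/

structure CGraph (C V : Type) where
  inv : C → V → V
  invol : ∀ c v, inv c (inv c v) = v
  no_fixed : ∀ c v, inv c v ≠ v

namespace CGraph

variable {C V : Type}

/-- `g G B` = number of connected components of the spanning subgraph `Γ_B` consisting of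
the edges whose color lies in `B`. -/
noncomputable def g (G : CGraph C V) (B : Set C) : ℕ :=
  Nat.card (Quotient (Relation.EqvGen.setoid (fun v w : V => ∃ c ∈ B, G.inv c v = w)))

/-- connectedness of the colored graph -/
def Conn (G : CGraph C V) : Prop := G.g Set.univ = 1

/-- the spanning subgraph `Γ_B` of edges colored in `B`, as a colored graph with color set `B` -/
def restrict (G : CGraph C V) (B : Set C) : CGraph B V where
  inv c v := G.inv c.val v
  invol c v := G.invol c.val v
  no_fixed c v := G.no_fixed c.val v

/-- reachability in the colored graph -/
def reach (G : CGraph C V) : V → V → Prop :=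
  Relation.EqvGen (fun v w : V => ∃ c, G.inv c v = w)

/-- the connected component of `G` containing `v0`, as a colored graph on the vertices
reachable from `v0` -/
def component (G : CGraph C V) (v0 : V) : CGraph C {w : V // G.reach v0 w} where
  inv c w := ⟨G.inv c w.val,
    Relation.EqvGen.trans _ _ _ w.property (Relation.EqvGen.rel _ _ ⟨c, rfl⟩)⟩
  invol c w := Subtype.ext (G.invol c w.val)
  no_fixed c w h := G.no_fixed c w.val (congrArg Subtype.val h)

/-- A cyclic permutation of the (finite) color set: a permutation consisting of a single cycle
through all the colors.  Cyclic permutations `ε = (ε_0, …, ε_d)` of the color set, up to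
rotation, correspond bijectively to such permutations `σ` (via `σ : ε_j ↦ ε_{j+1}`), and
taking the inverse cyclic permutation corresponds to `σ ↦ σ⁻¹`. -/
def IsCyclicPerm (σ : Equiv.Perm C) : Prop := σ.IsCycle ∧ ∀ c, σ c ≠ c

/-- Euler characteristic `χ_σ(Γ) = Σ_{j} g_{ε_j ε_{j+1}} + (1-(n-1))·p` of the surface of the
regular embedding associated with the cyclic permutation `σ`; here `n = #C`, the graph has
order `2p` (i.e. `p = (#V)/2`), and the consecutive pairs `{ε_j, ε_{j+1}}` are exactly the
pairs `{c, σ c}`, `c ∈ C`. -/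
noncomputable def chi (G : CGraph C V) (σ : Equiv.Perm C) : ℚ :=
  (∑ᶠ c : C, (G.g {c, σ c} : ℚ)) +
    (2 - (Nat.card C : ℚ)) * ((Nat.card V : ℚ) / 2)

/-- the genus `ρ_σ` of the regular embedding associated with `σ`:
for a connected graph it is `(2 - χ_σ)/2`; in general (`g G Set.univ` connected components)
it is the sum of the genera of the connected components, matching the convention that the
genus/G-degree of a disconnected colored graph is the sum over its connected components. -/
noncomputable def rho (G : CGraph C V) (σ : Equiv.Perm C) : ℚ :=
  (2 * (G.g Set.univ : ℚ) - G.chi σ) / 2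

/-- the Gurau degree `ω_G(Γ) = Σ ρ_ε(Γ)`, the sum over the cyclic permutations of the color
set up to inverse; each class `{σ, σ⁻¹}` has `ρ_σ = ρ_{σ⁻¹}`, whence the division by `2`. -/
noncomputable def omegaG (G : CGraph C V) : ℚ :=
  (∑ᶠ σ : {σ : Equiv.Perm C // IsCyclicPerm σ}, G.rho σ.val) / 2

/-- bipartiteness -/
def Bipartite (G : CGraph C V) : Prop := ∃ f : V → Bool, ∀ c v, f (G.inv c v) ≠ f v

/-- color-preserving isomorphism of colored graphs -/
def IsIso {V' : Type} (G : CGraph C V) (G' : CGraph C V') : Prop :=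
  ∃ e : V ≃ V', ∀ c v, e (G.inv c v) = G'.inv c (e v)

end CGraph

namespace CGraph

/-- A 5-colored graph represents a singular 4-manifold iff every connected component `Ξ`
(of order `2q_Ξ`) of every 3-residue `Γ_{{i,j,k}}` satisfies
`g_{ij}(Ξ) + g_{ik}(Ξ) + g_{jk}(Ξ) = q_Ξ + 2` (i.e. every 3-residue represents the 2-sphere).
Here the component of `Γ_{{i,j,k}}` containing a vertex `v0` has vertex set
`{w // (Γ_{{i,j,k}}).reach v0 w}`, and the pair `{i,j}` of its colors is the subset
`{c | c.val = i ∨ c.val = j}` of its color set `{i,j,k}`. -/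
def SingularCond {V : Type} (G : CGraph (Fin 5) V) : Prop :=
  ∀ i j k : Fin 5, i ≠ j → i ≠ k → j ≠ k → ∀ v0 : V,
    ((((G.restrict {i, j, k}).component v0).g {c | c.val = i ∨ c.val = j} : ℚ) +
        (((G.restrict {i, j, k}).component v0).g {c | c.val = i ∨ c.val = k} : ℚ) +
        (((G.restrict {i, j, k}).component v0).g {c | c.val = j ∨ c.val = k} : ℚ)) =
      (Nat.card {w : V // (G.restrict ({i, j, k} : Set (Fin 5))).reach v0 w} : ℚ) / 2 + 2

end CGraph

/-!
Only the pair counts `g_{rs}` survive. Every ordered pair of distinct colours is a consecutive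
pair of exactly 6 of the 24 cyclic permutations of `Δ₄`, so `ω_G` is an affine function of
`Σ g_{rs}`. Summing the 2-sphere condition over the components of a 3-residue `Γ_{rst}` gives
`g_{rs} + g_{rt} + g_{st} = p + 2 g_{rst}`, which eliminates `Σ g_{rst}` from the right-hand
side; the `g_î` cancel there on their own.
-/

open Relation Finset

namespace Setoid

variable {α : Type*}

theorem card_eq_sum_card_rel_out [Finite α] (S : Setoid α) [Fintype (Quotient S)] :
    Nat.card α = ∑ q : Quotient S, Nat.card {a // S q.out a} := by
  rw [← Nat.card_congr (Equiv.sigmaFiberEquiv (Quotient.mk S)), Nat.card_sigma]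
  refine Finset.sum_congr rfl fun q _ => Nat.card_congr (Equiv.subtypeEquivRight fun a => ?_)
  rw [Quotient.mk_eq_iff_out]
  exact ⟨S.symm, S.symm⟩

variable (S : Setoid α) {r : α → α → Prop}

theorem eqvGen_restrict_iff (hr : ∀ a b, r a b → S a b) {a₀ : α} (a b : {a // S a₀ a}) :
    EqvGen (fun x y : {a // S a₀ a} => r x y) a b ↔ EqvGen r a b := by
  constructor
  · intro h
    induction h with
    | rel x y hxy => exact .rel _ _ hxy
    | refl => exact .refl _
    | symm x y _ ih => exact .symm _ _ ih
    | trans x y z _ _ ih₁ ih₂ => exact .trans _ _ _ ih₁ ih₂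
  · obtain ⟨a, ha⟩ := a
    obtain ⟨b, hb⟩ := b
    intro (h : EqvGen r a b)
    induction h with
    | rel x y hxy => exact .rel _ _ hxy
    | refl => exact .refl _
    | symm x y _ ih => exact .symm _ _ (ih hb ha)
    | trans x y z hxy _ ih₁ ih₂ =>
      have hy : S a₀ y := S.trans ha (eqvGen_le hr hxy)
      exact .trans _ _ _ (ih₁ ha hy) (ih₂ hy hb)

theorem card_quotient_eqvGen_eq_sum [Finite α] [Fintype (Quotient S)]
    (hr : ∀ a b, r a b → S a b) :
    Nat.card (Quotient (EqvGen.setoid r)) =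
      ∑ q : Quotient S,
        Nat.card (Quotient (EqvGen.setoid fun x y : {a // S q.out a} => r x y)) := by
  let f : Quotient (EqvGen.setoid r) → Quotient S := Quotient.map' id (eqvGen_le hr)
  rw [← Nat.card_congr (Equiv.sigmaFiberEquiv f), Nat.card_sigma]
  refine Finset.sum_congr rfl fun q _ => (Nat.card_eq_of_bijective ?φ ⟨?inj, ?surj⟩).symm
  case φ =>
    refine Quotient.lift (fun x => ⟨Quotient.mk _ x.val, ?_⟩) fun x y h => ?_
    · exact (Quotient.sound (S.symm x.2)).trans q.out_eq
    · exact Subtype.ext (Quotient.sound ((eqvGen_restrict_iff S hr x y).1 h))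
  case inj =>
    rintro ⟨x⟩ ⟨y⟩ h
    exact Quotient.sound ((eqvGen_restrict_iff S hr x y).2
      (Quotient.exact (congrArg Subtype.val h)))
  case surj =>
    rintro ⟨⟨a⟩, ha⟩
    exact ⟨Quotient.mk _ ⟨a, S.symm (Quotient.mk_eq_iff_out.1 ha)⟩, rfl⟩

end Setoid

section DistinctTriples

variable {α M : Type*} [Fintype α] [DecidableEq α] [AddCommMonoid M]

theorem sum_ite_of_iff_ne_and_ne {P : α → Prop} [DecidablePred P] {a b : α}
    (hP : ∀ t, P t ↔ a ≠ b ∧ t ≠ a ∧ t ≠ b) (x : M) :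
    ∑ t, (if P t then x else 0) = if a = b then 0 else (Fintype.card α - 2) • x := by
  split_ifs with hab
  · simp [hP, hab]
  · have hfilter : ({t | P t} : Finset α) = {a, b}ᶜ := by ext; simp [hP, hab]
    rw [← Finset.sum_filter, Finset.sum_const, hfilter, card_compl, card_pair hab]

theorem sum_ite_distinct_triple_rs (f : α → α → M) :
    ∑ r, ∑ s, ∑ t, (if r ≠ s ∧ r ≠ t ∧ s ≠ t then f r s else 0) =
      (Fintype.card α - 2) • ∑ r, ∑ s, if r = s then 0 else f r s := by
  simp only [Finset.smul_sum, smul_ite, smul_zero]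
  refine Finset.sum_congr rfl fun r _ => Finset.sum_congr rfl fun s _ => ?_
  exact sum_ite_of_iff_ne_and_ne (fun t => by grind) _

theorem sum_ite_distinct_triple_rt (f : α → α → M) :
    ∑ r, ∑ s, ∑ t, (if r ≠ s ∧ r ≠ t ∧ s ≠ t then f r t else 0) =
      (Fintype.card α - 2) • ∑ r, ∑ s, if r = s then 0 else f r s := by
  simp only [Finset.smul_sum, smul_ite, smul_zero]
  refine Finset.sum_congr rfl fun r _ => Finset.sum_comm.trans (Finset.sum_congr rfl fun t _ => ?_)
  exact sum_ite_of_iff_ne_and_ne (fun s => by grind) _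

theorem sum_ite_distinct_triple_st (f : α → α → M) :
    ∑ r, ∑ s, ∑ t, (if r ≠ s ∧ r ≠ t ∧ s ≠ t then f s t else 0) =
      (Fintype.card α - 2) • ∑ r, ∑ s, if r = s then 0 else f r s := by
  simp only [Finset.smul_sum, smul_ite, smul_zero]
  rw [Finset.sum_comm]
  refine Finset.sum_congr rfl fun s _ => Finset.sum_comm.trans (Finset.sum_congr rfl fun t _ => ?_)
  exact sum_ite_of_iff_ne_and_ne (fun r => by grind) _

end DistinctTriples

namespace CGraph

open Equiv

section Components

variable {C V : Type} (G : CGraph C V)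

def reachSetoid : Setoid V := EqvGen.setoid fun v w => ∃ c, G.inv c v = w

theorem g_univ : G.g Set.univ = Nat.card (Quotient G.reachSetoid) := by
  simp only [g, reachSetoid, Set.mem_univ, true_and]

theorem g_restrict {T P : Set C} (hP : P ⊆ T) : (G.restrict T).g {c | c.val ∈ P} = G.g P := by
  unfold g restrict
  congr! 5 with v w
  exact ⟨fun ⟨c, hc, h⟩ => ⟨c, hc, h⟩, fun ⟨c, hc, h⟩ => ⟨⟨c, hP hc⟩, hc, h⟩⟩

theorem g_eq_sum_g_component [Finite V] [Fintype (Quotient G.reachSetoid)] (B : Set C) :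
    G.g B = ∑ q : Quotient G.reachSetoid, (G.component q.out).g B := by
  refine (G.reachSetoid.card_quotient_eqvGen_eq_sum fun v w ⟨c, _, h⟩ => .rel _ _ ⟨c, h⟩).trans ?_
  refine Finset.sum_congr rfl fun q _ => ?_
  unfold g component
  simp only [Subtype.ext_iff]
  rfl

end Components

theorem g_pair_add_g_pair_add_g_pair_eq {V : Type} [Finite V] (G : CGraph (Fin 5) V)
    (hsing : G.SingularCond) {i j k : Fin 5} (hij : i ≠ j) (hik : i ≠ k) (hjk : j ≠ k) :
    (G.g {i, j} + G.g {i, k} + G.g {j, k} : ℚ) = Nat.card V / 2 + 2 * G.g {i, j, k} := by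
  set T : Set (Fin 5) := {i, j, k}
  set H := G.restrict T
  have : Fintype (Quotient H.reachSetoid) := Fintype.ofFinite _
  have hpair : ∀ {a b}, a ∈ T → b ∈ T →
      G.g {a, b} = ∑ q : Quotient H.reachSetoid,
        (H.component q.out).g {c | c.val = a ∨ c.val = b} := fun ha hb => by
    rw [← G.g_restrict (Set.insert_subset ha (Set.singleton_subset_iff.2 hb)),
      H.g_eq_sum_g_component]
    rfl
  have htriple : G.g T = ∑ _q : Quotient H.reachSetoid, 1 := by
    have hT : {c : T | c.val ∈ T} = Set.univ := Set.eq_univ_of_forall Subtype.prop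
    rw [← G.g_restrict subset_rfl, hT, H.g_univ, Nat.card_eq_fintype_card,
      Fintype.card_eq_sum_ones]
  have hV : Nat.card V = ∑ q : Quotient H.reachSetoid, Nat.card {w // H.reach q.out w} :=
    Setoid.card_eq_sum_card_rel_out _
  have hmem : i ∈ T ∧ j ∈ T ∧ k ∈ T := by simp [T]
  rw [hpair hmem.1 hmem.2.1, hpair hmem.1 hmem.2.2, hpair hmem.2.1 hmem.2.2, htriple, hV]
  push_cast
  rw [← Finset.sum_add_distrib, ← Finset.sum_add_distrib, Finset.sum_div, Finset.mul_sum,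
    ← Finset.sum_add_distrib]
  exact Finset.sum_congr rfl fun q _ => by rw [hsing i j k hij hik hjk q.out]; ring

theorem two_mul_sum_g_triples {V : Type} [Finite V] {p : ℕ} (G : CGraph (Fin 5) V)
    (horder : Nat.card V = 2 * p) (hsing : G.SingularCond) :
    2 * ∑ r : Fin 5, ∑ s : Fin 5, ∑ t : Fin 5,
        (if r ≠ s ∧ r ≠ t ∧ s ≠ t then (G.g {r, s, t} : ℚ) else 0) =
      9 * (∑ r : Fin 5, ∑ s : Fin 5, if r = s then 0 else (G.g {r, s} : ℚ)) - 60 * p := by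
  have hpointwise : ∀ r s t : Fin 5,
      (if r ≠ s ∧ r ≠ t ∧ s ≠ t then 2 * (G.g {r, s, t} : ℚ) else 0) =
        (if r ≠ s ∧ r ≠ t ∧ s ≠ t then (G.g {r, s} : ℚ) else 0) +
        (if r ≠ s ∧ r ≠ t ∧ s ≠ t then (G.g {r, t} : ℚ) else 0) +
        (if r ≠ s ∧ r ≠ t ∧ s ≠ t then (G.g {s, t} : ℚ) else 0) -
        (if r ≠ s ∧ r ≠ t ∧ s ≠ t then (p : ℚ) else 0) := fun r s t => by
    split_ifs with h
    · have := G.g_pair_add_g_pair_add_g_pair_eq hsing h.1 h.2.1 h.2.2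
      rw [horder] at this
      push_cast at this
      linarith
    · ring
  have hconst : ∑ r : Fin 5, ∑ s : Fin 5, ∑ t : Fin 5,
      (if r ≠ s ∧ r ≠ t ∧ s ≠ t then (p : ℚ) else 0) = 60 * p := by
    rw [sum_ite_distinct_triple_rs fun _ _ => (p : ℚ)]
    simp only [Fintype.card_fin, Nat.reduceSub, Fin.sum_univ_five, Fin.isValue, ↓reduceIte,
      Fin.reduceEq, nsmul_eq_mul, Nat.cast_ofNat]
    ring
  calc 2 * ∑ r : Fin 5, ∑ s : Fin 5, ∑ t : Fin 5,
        (if r ≠ s ∧ r ≠ t ∧ s ≠ t then (G.g {r, s, t} : ℚ) else 0)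
      = ∑ r : Fin 5, ∑ s : Fin 5, ∑ t : Fin 5,
          (if r ≠ s ∧ r ≠ t ∧ s ≠ t then 2 * (G.g {r, s, t} : ℚ) else 0) := by
        simp only [Finset.mul_sum, mul_ite, mul_zero]
    _ = 9 * (∑ r : Fin 5, ∑ s : Fin 5, if r = s then 0 else (G.g {r, s} : ℚ)) - 60 * p := by
        simp only [hpointwise, Finset.sum_add_distrib, Finset.sum_sub_distrib,
          sum_ite_distinct_triple_rs fun r s => (G.g {r, s} : ℚ),
          sum_ite_distinct_triple_rt fun r s => (G.g {r, s} : ℚ),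
          sum_ite_distinct_triple_st fun r s => (G.g {r, s} : ℚ), hconst, Fintype.card_fin,
          Nat.reduceSub, nsmul_eq_mul, Nat.cast_ofNat]
        ring

theorem isCyclicPerm_iff_pow_card_eq_one {α : Type} [Fintype α] [DecidableEq α]
    (hα : (Fintype.card α).Prime) {σ : Perm α} :
    IsCyclicPerm σ ↔ σ ^ Fintype.card α = 1 ∧ σ ≠ 1 := by
  have : Nonempty α := Fintype.card_pos_iff.1 hα.pos
  constructor
  · rintro ⟨hcyc, hfix⟩
    have hsupp : σ.support = univ := eq_univ_of_forall fun c => Perm.mem_support.2 (hfix c)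
    refine ⟨?_, fun h => hfix (Classical.arbitrary α) (by rw [h, Perm.one_apply])⟩
    rw [← card_univ, ← hsupp, ← hcyc.orderOf, pow_orderOf_eq_one]
  · rintro ⟨hpow, hne⟩
    have hord : orderOf σ = Fintype.card α :=
      (hα.eq_one_or_self_of_dvd _ (orderOf_dvd_of_pow_eq_one hpow)).resolve_left
        (mt orderOf_eq_one_iff.1 hne)
    have hcyc : σ.IsCycle := Perm.isCycle_of_prime_order'' hα hord
    have hsupp : σ.support = univ := eq_univ_of_card _ (by rw [← hcyc.orderOf, hord])
    exact ⟨hcyc, fun c => Perm.mem_support.1 (hsupp ▸ mem_univ c)⟩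

theorem finsum_isCyclicPerm_fin_five {M : Type*} [AddCommMonoid M] (F : Perm (Fin 5) → M) :
    ∑ᶠ σ : {σ // IsCyclicPerm σ}, F σ.val = ∑ σ with σ ^ 5 = 1 ∧ σ ≠ 1, F σ := by
  have : Fintype {σ : Perm (Fin 5) // IsCyclicPerm σ} := Fintype.ofFinite _
  rw [finsum_eq_sum_of_fintype, ← Finset.sum_subtype _ fun σ => ?_]
  rw [mem_filter_univ, isCyclicPerm_iff_pow_card_eq_one (by rw [Fintype.card_fin]; norm_num),
    Fintype.card_fin]

set_option maxRecDepth 40000 in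
theorem card_cyclicPerm_fin_five :
    #{σ : Perm (Fin 5) | σ ^ 5 = 1 ∧ σ ≠ 1} = 24 := by
  decide

set_option maxRecDepth 40000 in
theorem card_cyclicPerm_apply_eq_fin_five (c s : Fin 5) :
    #{σ : Perm (Fin 5) | (σ ^ 5 = 1 ∧ σ ≠ 1) ∧ σ c = s} = if c = s then 0 else 6 := by
  revert c s
  decide

theorem sum_cyclicPerm_sum_apply_fin_five {M : Type*} [AddCommMonoid M] (f : Fin 5 → Fin 5 → M) :
    ∑ σ : Perm (Fin 5) with σ ^ 5 = 1 ∧ σ ≠ 1, ∑ c, f c (σ c) =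
      6 • ∑ r, ∑ s, if r = s then 0 else f r s := by
  rw [Finset.sum_comm, Finset.smul_sum]
  refine Finset.sum_congr rfl fun c _ => ?_
  rw [← Finset.sum_fiberwise' _ (fun σ : Perm (Fin 5) => σ c) (f c), Finset.smul_sum]
  refine Finset.sum_congr rfl fun s _ => ?_
  rw [Finset.sum_const, Finset.filter_filter, card_cyclicPerm_apply_eq_fin_five]
  split_ifs <;> simp

theorem omegaG_eq_of_conn {V : Type} [Finite V] {p : ℕ} (G : CGraph (Fin 5) V) (hconn : G.Conn)
    (horder : Nat.card V = 2 * p) :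
    G.omegaG = 12 + 18 * p - 3 / 2 * ∑ r, ∑ s, if r = s then 0 else (G.g {r, s} : ℚ) := by
  have hrho : ∀ σ, G.rho σ = (2 + 3 * p - ∑ c, (G.g {c, σ c} : ℚ)) / 2 := fun σ => by
    rw [rho, chi, finsum_eq_sum_of_fintype, hconn, horder, Nat.card_eq_fintype_card,
      Fintype.card_fin]
    push_cast
    ring
  rw [omegaG, finsum_isCyclicPerm_fin_five, Finset.sum_congr rfl fun σ _ => hrho σ,
    ← Finset.sum_div, Finset.sum_sub_distrib,
    sum_cyclicPerm_sum_apply_fin_five fun r s => (G.g {r, s} : ℚ),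
    Finset.sum_const, card_cyclicPerm_fin_five]
  simp only [nsmul_eq_mul]
  push_cast
  ring

end CGraph

open CGraph in
/-- Theorem `G-degree(n=4)`, third relation: for a 5-colored graph of order
`2p` representing a singular 4-manifold,
`ω_G(Γ) = 6·((p−1) − Σ_{i∈Δ₄}(g_î − 1) + (χ(K(Γ)) − 2))`, where
`χ(K(Γ)) = Σ_i g_î − Σ_{{r,s,t}} g_{rst} + Σ_{{r,s}} g_{rs} − 3p` (unordered triple and pair
sums written as ordered sums divided by 6 resp. 2). -/
theorem stmt14 {p : ℕ} {V : Type} [Finite V]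
    (G : CGraph (Fin 5) V) (hconn : G.Conn) (horder : Nat.card V = 2 * p)
    (hsing : G.SingularCond) :
    G.omegaG = 6 * (((p : ℚ) - 1) - (∑ i : Fin 5, ((G.g {c | c ≠ i} : ℚ) - 1)) +
        (((∑ i : Fin 5, (G.g {c | c ≠ i} : ℚ)) -
            (∑ r : Fin 5, ∑ s : Fin 5, ∑ t : Fin 5,
              if r ≠ s ∧ r ≠ t ∧ s ≠ t then (G.g {r, s, t} : ℚ) else 0) / 6 +
            (∑ r : Fin 5, ∑ s : Fin 5, if r = s then 0 else (G.g {r, s} : ℚ)) / 2 -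
            3 * (p : ℚ)) - 2)) := by
  have htriples := G.two_mul_sum_g_triples horder hsing
  rw [G.omegaG_eq_of_conn hconn horder, Finset.sum_sub_distrib]
  simp only [Finset.sum_const, Finset.card_univ, Fintype.card_fin, nsmul_eq_mul]
  linarith
end

section
/- Let (Γ,γ) be a 5-colored graph of order 2p with g_{î} = 1 for every i ∈ Δ₄ (a crystallization). Then ω_G(Γ) = 3(p−1) + Σ_{i∈Δ₄} ω_G(Γ_{î}); consequently, if ω_G(Γ) ≤ 3(p−1) + 14, then there exists a color i ∈ Δ₄ such that ω_G(Γ_{î}) ≤ 2. -/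
/-!
For a connected graph with `n + 2` colors each `ρ_σ` is an affine function of `Σ_c g_{c, σ c}`.
Conjugation permutes the `(n + 1)!` cyclic permutations transitively on ordered pairs `(c, σ c)`
of distinct colors, so each such pair occurs for exactly `n!` of them, and `ω_G` becomes an
affine function of `Σ_{c ≠ y} g_{c y}`. In a crystallization every `Γ_î` is connected and each
pair of colors survives in `n + 1` of the graphs `Γ_î`; comparing the affine formulas gives
`ω_G(Γ) = (n + 1)!/2 · (p - 1) + Σ_i ω_G(Γ_î)`. With four colors the formula reads
`3 + 3p - Σ_{c < y} g_{c y}`, an integer, so `Σ_i ω_G(Γ_î) ≤ 14` forces some `ω_G(Γ_î) ≤ 2`.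
-/

namespace CGraph

open Equiv Finset
open scoped Nat

section CyclicPerm

variable {α : Type} [Fintype α] [DecidableEq α]

theorem isCyclicPerm_iff_cycleType {σ : Perm α} :
    IsCyclicPerm σ ↔ σ.cycleType = {Fintype.card α} := by
  have hsupp : (∀ c, σ c ≠ c) ↔ σ.support = univ := by
    simp [Finset.eq_univ_iff_forall]
  constructor
  · rintro ⟨hσ, hfix⟩
    rw [hσ.cycleType, hsupp.1 hfix, card_univ]
  · intro h
    have hcyc : σ.IsCycle := Perm.card_cycleType_eq_one.1 (by simp [h])
    refine ⟨hcyc, hsupp.2 (eq_univ_of_card _ ?_)⟩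
    rw [← Perm.sum_cycleType, h, Multiset.sum_singleton]

open Classical in
theorem card_isCyclicPerm (h : 2 ≤ Fintype.card α) :
    #{σ : Perm α | IsCyclicPerm σ} = (Fintype.card α - 1)! := by
  simp_rw [isCyclicPerm_iff_cycleType]
  rw [Perm.card_of_cycleType_singleton h le_rfl, Nat.choose_self, mul_one]

theorem isCyclicPerm_conj_iff (τ σ : Perm α) :
    IsCyclicPerm (τ * σ * τ⁻¹) ↔ IsCyclicPerm σ := by
  simp only [isCyclicPerm_iff_cycleType, Perm.cycleType_conj]

open Classical in
theorem card_isCyclicPerm_apply_conj (τ : Perm α) (c y : α) :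
    #{σ : Perm α | IsCyclicPerm σ ∧ σ (τ c) = τ y} =
      #{σ : Perm α | IsCyclicPerm σ ∧ σ c = y} := by
  refine card_nbij' (fun σ => τ⁻¹ * σ * τ) (fun σ => τ * σ * τ⁻¹) ?_ ?_ ?_ ?_
  · intro σ hσ
    simp only [coe_filter, mem_univ, true_and, Set.mem_ofPred_eq] at hσ ⊢
    exact ⟨by simpa using (isCyclicPerm_conj_iff τ⁻¹ σ).2 hσ.1, by simp [hσ.2]⟩
  · intro σ hσ
    simp only [coe_filter, mem_univ, true_and, Set.mem_ofPred_eq] at hσ ⊢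
    exact ⟨(isCyclicPerm_conj_iff τ σ).2 hσ.1, by simp [hσ.2]⟩
  · intro σ _; simp [mul_assoc]
  · intro σ _; simp [mul_assoc]

open Classical in
theorem card_isCyclicPerm_apply_eq {c y : α} (hcy : c ≠ y) :
    #{σ : Perm α | IsCyclicPerm σ ∧ σ c = y} = (Fintype.card α - 2)! := by
  set k := #{σ : Perm α | IsCyclicPerm σ ∧ σ c = y}
  obtain ⟨m, hm⟩ : ∃ m, Fintype.card α = m + 2 :=
    ⟨Fintype.card α - 2, by have := Fintype.one_lt_card_iff.2 ⟨c, y, hcy⟩; omega⟩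
  have hconst : ∀ y' ∈ univ.erase c, #{σ : Perm α | IsCyclicPerm σ ∧ σ c = y'} = k := by
    intro y' hy'
    have := card_isCyclicPerm_apply_conj (swap y y') c y
    rwa [swap_apply_of_ne_of_ne hcy (ne_of_mem_erase hy').symm, swap_apply_left] at this
  have hfixed : #{σ : Perm α | IsCyclicPerm σ ∧ σ c = c} = 0 :=
    card_eq_zero.2 (filter_eq_empty_iff.2 fun σ _ hσ => hσ.1.2 c hσ.2)
  have hfiber : #{σ : Perm α | IsCyclicPerm σ} =
      ∑ y', #{σ : Perm α | IsCyclicPerm σ ∧ σ c = y'} := by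
    rw [card_eq_sum_card_fiberwise (t := univ) (f := fun σ : Perm α => σ c) (by simp)]
    simp only [filter_filter]
  rw [card_isCyclicPerm (by omega), ← add_sum_erase _ _ (mem_univ c), hfixed, zero_add,
    sum_congr rfl hconst, sum_const, card_erase_of_mem (mem_univ c), card_univ, smul_eq_mul,
    hm] at hfiber
  rw [show m + 2 - 1 = m + 1 by omega, Nat.factorial_succ] at hfiber
  rw [hm, Nat.add_sub_cancel]
  exact (Nat.eq_of_mul_eq_mul_left m.succ_pos hfiber).symm

open Classical in
theorem sum_isCyclicPerm_sum_apply {M : Type} [AddCommMonoid M] (f : α → α → M) :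
    ∑ σ : Perm α with IsCyclicPerm σ, ∑ c, f c (σ c) =
      (Fintype.card α - 2)! • ∑ c, ∑ y with y ≠ c, f c y := by
  rw [sum_comm, smul_sum]
  refine sum_congr rfl fun c _ => ?_
  rw [← sum_fiberwise_of_maps_to (g := fun σ : Perm α => σ c) (t := univ) (by simp),
    smul_sum, sum_filter]
  refine sum_congr rfl fun y _ => ?_
  rw [filter_filter]
  split_ifs with hy
  · rw [sum_congr rfl fun σ hσ => by rw [(mem_filter.1 hσ).2.2], sum_const,
      card_isCyclicPerm_apply_eq (Ne.symm hy)]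
  · refine sum_eq_zero fun σ hσ => absurd ?_ ((mem_filter.1 hσ).2.1.2 c)
    rw [(mem_filter.1 hσ).2.2, not_not.1 hy]

end CyclicPerm

section Formula

variable {C V : Type} [Fintype C]

theorem rho_eq_of_conn {n p : ℕ} {G : CGraph C V} (hC : Fintype.card C = n + 2)
    (hconn : G.Conn) (horder : Nat.card V = 2 * p) (σ : Perm C) :
    G.rho σ = (2 + n * p - ∑ c, (G.g {c, σ c} : ℚ)) / 2 := by
  rw [rho, chi, show G.g Set.univ = 1 from hconn, finsum_eq_sum_of_fintype,
    Nat.card_eq_fintype_card, hC, horder]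
  push_cast
  ring

noncomputable def gPairSum [DecidableEq C] (G : CGraph C V) : ℕ :=
  ∑ c, ∑ y with y ≠ c, G.g {c, y}

theorem omegaG_eq_of_conn_s18 [DecidableEq C] {n p : ℕ} {G : CGraph C V}
    (hC : Fintype.card C = n + 2) (hconn : G.Conn) (horder : Nat.card V = 2 * p) :
    G.omegaG = n ! / 4 * ((n + 1) * (2 + n * p) - G.gPairSum) := by
  classical
  rw [omegaG, finsum_eq_sum_of_fintype,
    ← sum_subtype {σ : Perm C | IsCyclicPerm σ} (by simp) (fun σ => G.rho σ)]
  simp_rw [rho_eq_of_conn hC hconn horder]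
  rw [← sum_div, sum_sub_distrib, sum_const, card_isCyclicPerm (by omega),
    sum_isCyclicPerm_sum_apply (fun c y => (G.g {c, y} : ℚ)), hC, gPairSum,
    show n + 2 - 1 = n + 1 by omega, Nat.add_sub_cancel, Nat.factorial_succ]
  push_cast
  ring

end Formula

section DoubleCounting

variable {C : Type} [Fintype C] [DecidableEq C]

theorem card_filter_ne_and_ne {c y : C} (hcy : y ≠ c) :
    #{i : C | i ≠ c ∧ i ≠ y} = Fintype.card C - 2 := by
  have herase : ({i : C | i ≠ c ∧ i ≠ y} : Finset C) = (univ.erase c).erase y := by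
    ext i; simp [and_comm]
  rw [herase, card_erase_of_mem (by simpa using hcy), card_erase_of_mem (mem_univ c), card_univ]
  omega

theorem sum_sum_sum_ne {M : Type} [AddCommMonoid M] (f : C → C → M) :
    ∑ i, ∑ c with c ≠ i, ∑ y with y ≠ i ∧ y ≠ c, f c y =
      (Fintype.card C - 2) • ∑ c, ∑ y with y ≠ c, f c y := by
  rw [sum_comm' (t' := univ) (s' := fun c => {i : C | i ≠ c}) (by simp [ne_comm]), smul_sum]
  refine sum_congr rfl fun c _ => ?_
  rw [sum_comm' (t' := {y : C | y ≠ c}) (s' := fun y => {i : C | i ≠ c ∧ i ≠ y})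
    (by intro i y; simp only [mem_filter, mem_univ, true_and]; tauto), smul_sum]
  refine sum_congr rfl fun y hy => ?_
  rw [sum_const, card_filter_ne_and_ne (mem_filter.1 hy).2]

theorem even_sum_sum_ne {f : C → C → ℕ} (hf : ∀ c y, f c y = f y c) :
    Even (∑ c, ∑ y with y ≠ c, f c y) := by
  let e := Fintype.equivFin C
  have hsplit : ∀ c y, (if y ≠ c then f c y else 0) =
      (if e c < e y then f c y else 0) + (if e y < e c then f c y else 0) := by
    intro c y
    rcases lt_trichotomy (e c) (e y) with h | h | h
    · simp [h, h.not_gt, ne_of_apply_ne e h.ne']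
    · simp [e.injective h]
    · simp [h, h.not_gt, ne_of_apply_ne e h.ne]
  simp_rw [sum_filter, hsplit, sum_add_distrib]
  rw [sum_comm (f := fun c y => if e y < e c then f c y else 0)]
  simp_rw [hf]
  exact ⟨_, rfl⟩

end DoubleCounting

section Restrict

variable {C V : Type}

theorem g_restrict_s18 (G : CGraph C V) (B : Set C) (B' : Set B) :
    (G.restrict B).g B' = G.g (Subtype.val '' B') := by
  simp only [g, restrict, Set.mem_image, Subtype.exists, exists_and_right, exists_eq_right]

theorem restrict_conn_iff (G : CGraph C V) (B : Set C) :
    (G.restrict B).Conn ↔ G.g B = 1 := by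
  rw [Conn, g_restrict_s18, Set.image_univ, Subtype.range_coe]

variable [Fintype C] [DecidableEq C]

theorem card_setOf_ne (i : C) : Fintype.card {c | c ≠ i} = Fintype.card C - 1 := by
  simp [filter_ne', card_univ]

theorem gPairSum_restrict_ne (G : CGraph C V) (i : C) :
    (G.restrict {c | c ≠ i}).gPairSum =
      ∑ c with c ≠ i, ∑ y with y ≠ i ∧ y ≠ c, G.g {c, y} := by
  simp only [gPairSum, g_restrict_s18, Set.image_pair]
  symm
  rw [sum_subtype _ (p := (· ∈ {c | c ≠ i})) (by simp)]
  refine sum_congr rfl fun c _ => ?_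
  rw [← filter_filter, sum_filter,
    sum_subtype (F := inferInstance) _ (p := (· ∈ {c | c ≠ i})) (by simp), sum_filter]
  simp only [ne_eq, ← Subtype.ext_iff]

end Restrict

section Crystallization

variable {C V : Type} [Fintype C] [DecidableEq C]

theorem omegaG_eq_add_sum_omegaG_restrict {n p : ℕ} {G : CGraph C V}
    (hC : Fintype.card C = n + 3) (hconn : G.Conn) (horder : Nat.card V = 2 * p)
    (hcr : ∀ i, G.g {c | c ≠ i} = 1) :
    G.omegaG = (n + 1)! / 2 * ((p : ℚ) - 1) + ∑ i, (G.restrict {c | c ≠ i}).omegaG := by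
  have hres : ∀ i, (G.restrict {c | c ≠ i}).omegaG =
      n ! / 4 * ((n + 1) * (2 + n * p) -
        (∑ c with c ≠ i, ∑ y with y ≠ i ∧ y ≠ c, G.g {c, y} : ℕ)) := by
    intro i
    rw [omegaG_eq_of_conn_s18 (n := n) (by rw [card_setOf_ne, hC]; rfl)
      ((restrict_conn_iff G _).2 (hcr i)) horder, gPairSum_restrict_ne]
  have hcount : ∑ i, ∑ c with c ≠ i, ∑ y with y ≠ i ∧ y ≠ c, G.g {c, y} =
      (n + 1) * G.gPairSum := by
    rw [sum_sum_sum_ne, hC, smul_eq_mul, gPairSum]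
    rfl
  simp only [hres]
  rw [omegaG_eq_of_conn_s18 hC hconn horder, ← mul_sum, sum_sub_distrib, sum_const, card_univ, hC,
    ← Nat.cast_sum, hcount, Nat.factorial_succ]
  push_cast
  ring

theorem exists_omegaG_eq_intCast_of_card_eq_four {p : ℕ} {G : CGraph C V}
    (hC : Fintype.card C = 4) (hconn : G.Conn) (horder : Nat.card V = 2 * p) :
    ∃ z : ℤ, G.omegaG = z := by
  obtain ⟨k, hk⟩ := even_sum_sum_ne (f := fun c y => G.g {c, y}) fun c y => by
    rw [Set.pair_comm]
  refine ⟨3 + 3 * p - k, ?_⟩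
  rw [omegaG_eq_of_conn_s18 (n := 2) hC hconn horder, gPairSum, hk]
  push_cast
  ring

end Crystallization

end CGraph

open CGraph in
theorem stmt18_general {p : ℕ} {V : Type}
    (G : CGraph (Fin 5) V) (hconn : G.Conn) (horder : Nat.card V = 2 * p)
    (hcr : ∀ i : Fin 5, G.g {c | c ≠ i} = 1) :
    G.omegaG = 3 * ((p : ℚ) - 1) + ∑ i : Fin 5, (G.restrict {c | c ≠ i}).omegaG ∧
      (G.omegaG ≤ 3 * ((p : ℚ) - 1) + 14 →
        ∃ i : Fin 5, (G.restrict {c | c ≠ i}).omegaG ≤ 2) := by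
  have hsum :
      G.omegaG = 3 * ((p : ℚ) - 1) + ∑ i : Fin 5, (G.restrict {c | c ≠ i}).omegaG := by
    rw [omegaG_eq_add_sum_omegaG_restrict (n := 2) (by simp) hconn horder hcr]
    norm_num [Nat.factorial]
  refine ⟨hsum, fun hle => ?_⟩
  by_contra! hgt
  have hge : ∀ i : Fin 5, 3 ≤ (G.restrict {c | c ≠ i}).omegaG := by
    intro i
    obtain ⟨z, hz⟩ := exists_omegaG_eq_intCast_of_card_eq_four
      (by rw [card_setOf_ne, Fintype.card_fin]) ((restrict_conn_iff G _).2 (hcr i)) horder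
    have := hgt i
    rw [hz] at this ⊢
    exact_mod_cast (show (2 : ℤ) < z by exact_mod_cast this)
  rw [Fin.sum_univ_five] at hsum
  linarith [hge 0, hge 1, hge 2, hge 3, hge 4]

open CGraph in
/-- from Proposition `classif_G-degree(n=4_subgenus)`: if `Γ` is a 5-colored
graph of order `2p` with `g_î = 1` for every `i ∈ Δ₄` (a crystallization), then
`ω_G(Γ) = 3(p−1) + Σ_{i∈Δ₄} ω_G(Γ_î)`; consequently, if `ω_G(Γ) ≤ 3(p−1) + 14` then some color
`i` has `ω_G(Γ_î) ≤ 2`.  (`ω_G(Γ_î)` is the sum of the G-degrees of the connected components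
of the 4-colored graph `Γ_î`.) -/
theorem stmt18 {p : ℕ} {V : Type} [Finite V]
    (G : CGraph (Fin 5) V) (hconn : G.Conn) (horder : Nat.card V = 2 * p)
    (hcr : ∀ i : Fin 5, G.g {c | c ≠ i} = 1) :
    G.omegaG = 3 * ((p : ℚ) - 1) + ∑ i : Fin 5, (G.restrict {c | c ≠ i}).omegaG ∧
      (G.omegaG ≤ 3 * ((p : ℚ) - 1) + 14 →
        ∃ i : Fin 5, (G.restrict {c | c ≠ i}).omegaG ≤ 2) :=
  stmt18_general G hconn horder hcr
end
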